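/- Let d ∈ (0, 1/2) and define the differenced fractional kernel f̃_d(s) = ( s_+^d − 2(s−1)_+^d + (s−2)_+^d )/Γ(d+1). Then there exist constants C, C' > 0 such that |f̃_d(t)| ≤ C min(1, |t|^{d−2}) for all t ∈ ℝ, and ∫_ℝ |f̃_d(t) f̃_d(t+k)| dt ≤ C' min(1, |k|^{d−1}) for all k ∈ ℤ; consequently Σ_{k∈ℤ} ( ∫_ℝ |f̃_d(t) f̃_d(t+k)| dt )² < ∞. -/

import Mathlib

open MeasureTheory Real
open scoped ENNReal

/-- The differenced fractional kernel
`f̃_d(s) = (s₊^d − 2(s−1)₊^d + (s−2)₊^d)/Γ(d+1)`. -/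
noncomputable def diffFracKernel (d : ℝ) (s : ℝ) : ℝ :=
  (max s 0 ^ d - 2 * max (s - 1) 0 ^ d + max (s - 2) 0 ^ d) / Real.Gamma (d + 1)

/-!
For `t ≥ 3` the numerator of `f̃_d(t)` is a second difference of `s ↦ s ^ d`, hence equals
`d (d - 1) e ^ (d - 2)` for some `e ∈ (t - 2, t)`; it is bounded on `(0, 3]` and vanishes for
`t ≤ 0`. So `|f̃_d|` is dominated by a multiple of `min(1, |t| ^ (d - 2))`, which is integrable
as `d - 2 < -1`. For `k ≠ 0` one of `t`, `t + k` is at distance at least `|k| / 2` from the origin,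
so the product of the two envelopes is at most `(|k| / 2) ^ (d - 2)` times their sum, and
integrating gives `O(|k| ^ (d - 2)) ⊆ O(|k| ^ (d - 1))`. The squares are `O(|k| ^ (2d - 2))`,
summable as `2d - 2 < -1`.
-/

open Set Filter

noncomputable def decayEnvelope (p t : ℝ) : ℝ := min 1 (|t| ^ p)

section DecayEnvelope

variable {p : ℝ}

lemma decayEnvelope_nonneg (p t : ℝ) : 0 ≤ decayEnvelope p t :=
  le_min zero_le_one (rpow_nonneg (abs_nonneg t) _)

lemma decayEnvelope_le_one (p t : ℝ) : decayEnvelope p t ≤ 1 := min_le_left _ _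

lemma decayEnvelope_le_rpow_of_le_abs (hp : p ≤ 0) {a t : ℝ} (ha : 0 < a) (h : a ≤ |t|) :
    decayEnvelope p t ≤ a ^ p :=
  (min_le_right _ _).trans (rpow_le_rpow_of_nonpos ha h hp)

lemma decayEnvelope_eq_rpow (hp : p ≤ 0) {t : ℝ} (ht : 1 ≤ t) : decayEnvelope p t = t ^ p := by
  rw [decayEnvelope, abs_of_nonneg (by linarith)]
  exact min_eq_right (rpow_le_one_of_one_le_of_nonpos ht hp)

lemma measurable_decayEnvelope (p : ℝ) : Measurable (decayEnvelope p) := by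
  unfold decayEnvelope; fun_prop

lemma decayEnvelope_le_one_add_abs_rpow (hp : p ≤ 0) (t : ℝ) :
    decayEnvelope p t ≤ 2 ^ (-p) * (1 + |t|) ^ p := by
  have h2p : 2 ^ (-p) * 2 ^ p = (1 : ℝ) := by rw [← rpow_add two_pos, neg_add_cancel, rpow_zero]
  rcases le_total |t| 1 with ht | ht
  · calc decayEnvelope p t ≤ 1 := decayEnvelope_le_one p t
      _ = 2 ^ (-p) * 2 ^ p := h2p.symm
      _ ≤ 2 ^ (-p) * (1 + |t|) ^ p := by
        gcongr 2 ^ (-p) * ?_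
        exact rpow_le_rpow_of_nonpos (by positivity) (by linarith) hp
  · calc decayEnvelope p t ≤ |t| ^ p := min_le_right _ _
      _ = 2 ^ (-p) * (2 * |t|) ^ p := by
        rw [mul_rpow zero_le_two (abs_nonneg t), ← mul_assoc, h2p, one_mul]
      _ ≤ 2 ^ (-p) * (1 + |t|) ^ p := by
        gcongr 2 ^ (-p) * ?_
        exact rpow_le_rpow_of_nonpos (by positivity) (by linarith) hp

lemma integrable_decayEnvelope (hp : p < -1) : Integrable (decayEnvelope p) := by
  have hmaj : Integrable fun t : ℝ => 2 ^ (-p) * (1 + ‖t‖) ^ (-(-p)) :=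
    (integrable_one_add_norm (by simpa using (show 1 < -p by linarith))).const_mul _
  refine hmaj.mono' (measurable_decayEnvelope p).aestronglyMeasurable
    (Eventually.of_forall fun t => ?_)
  rw [norm_of_nonneg (decayEnvelope_nonneg p t), neg_neg, norm_eq_abs]
  exact decayEnvelope_le_one_add_abs_rpow (by linarith) t

lemma decayEnvelope_mul_le (hp : p ≤ 0) {a : ℝ} (ha : a ≠ 0) (t : ℝ) :
    decayEnvelope p t * decayEnvelope p (t + a)
      ≤ (|a| / 2) ^ p * (decayEnvelope p t + decayEnvelope p (t + a)) := by
  have ha2 : 0 < |a| / 2 := by positivity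
  have h0 := decayEnvelope_nonneg p t
  have h1 := decayEnvelope_nonneg p (t + a)
  have hpow : 0 ≤ (|a| / 2) ^ p := rpow_nonneg ha2.le _
  rcases le_total (|a| / 2) |t| with ht | ht
  · have := decayEnvelope_le_rpow_of_le_abs hp ha2 ht
    nlinarith
  · have hta : |a| / 2 ≤ |t + a| := by
      have := abs_sub (t + a) t
      rw [add_sub_cancel_left] at this
      linarith
    have := decayEnvelope_le_rpow_of_le_abs hp ha2 hta
    nlinarith

lemma integral_decayEnvelope_pos (hp : p < -1) : 0 < ∫ t, decayEnvelope p t := by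
  rw [integral_pos_iff_support_of_nonneg (decayEnvelope_nonneg p) (integrable_decayEnvelope hp)]
  refine lt_of_lt_of_le ?_ (measure_mono (s := Ioi 0) fun t (ht : 0 < t) => ?_)
  · simp
  · exact (lt_min one_pos (rpow_pos_of_pos (abs_pos.2 ht.ne') p)).ne'

end DecayEnvelope

noncomputable def absCorrelation (f : ℝ → ℝ) (a : ℝ) : ℝ := ∫ t, |f t * f (t + a)|

section AbsCorrelation

variable {f : ℝ → ℝ} {C p : ℝ}

lemma abs_mul_shift_le_envelope_mul (hf : ∀ t, |f t| ≤ C * decayEnvelope p t) (a t : ℝ) :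
    |f t * f (t + a)| ≤ C ^ 2 * (decayEnvelope p t * decayEnvelope p (t + a)) := by
  rw [abs_mul]
  calc |f t| * |f (t + a)| ≤ (C * decayEnvelope p t) * (C * decayEnvelope p (t + a)) :=
        mul_le_mul (hf t) (hf (t + a)) (abs_nonneg _) ((abs_nonneg _).trans (hf t))
    _ = _ := by ring

lemma abs_mul_shift_le_envelope (hf : ∀ t, |f t| ≤ C * decayEnvelope p t) (a t : ℝ) :
    |f t * f (t + a)| ≤ C ^ 2 * decayEnvelope p t :=
  (abs_mul_shift_le_envelope_mul hf a t).trans <| by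
    gcongr
    exact mul_le_of_le_one_right (decayEnvelope_nonneg p t) (decayEnvelope_le_one p _)

lemma integrable_abs_mul_shift (hmeas : Measurable f) (hf : ∀ t, |f t| ≤ C * decayEnvelope p t)
    (hp : p < -1) (a : ℝ) : Integrable fun t => |f t * f (t + a)| :=
  ((integrable_decayEnvelope hp).const_mul (C ^ 2)).mono'
    (hmeas.mul (hmeas.comp (measurable_add_const a))).abs.aestronglyMeasurable
    (Eventually.of_forall fun t => by
      rw [norm_eq_abs, abs_abs]; exact abs_mul_shift_le_envelope hf a t)

lemma absCorrelation_le (hmeas : Measurable f) (hf : ∀ t, |f t| ≤ C * decayEnvelope p t)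
    (hp : p < -1) (a : ℝ) : absCorrelation f a ≤ C ^ 2 * ∫ t, decayEnvelope p t := by
  rw [absCorrelation, ← integral_const_mul]
  exact integral_mono (integrable_abs_mul_shift hmeas hf hp a)
    ((integrable_decayEnvelope hp).const_mul _) (abs_mul_shift_le_envelope hf a)

lemma absCorrelation_le_of_ne_zero (hmeas : Measurable f)
    (hf : ∀ t, |f t| ≤ C * decayEnvelope p t) (hp : p < -1) {a : ℝ} (ha : a ≠ 0) :
    absCorrelation f a ≤ 2 * C ^ 2 * (∫ t, decayEnvelope p t) * (|a| / 2) ^ p := by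
  have hint := integrable_decayEnvelope hp
  have hbound (t : ℝ) : |f t * f (t + a)|
      ≤ C ^ 2 * (|a| / 2) ^ p * (decayEnvelope p t + decayEnvelope p (t + a)) := by
    refine (abs_mul_shift_le_envelope_mul hf a t).trans ?_
    rw [mul_assoc]
    exact mul_le_mul_of_nonneg_left (decayEnvelope_mul_le (by linarith) ha t) (sq_nonneg C)
  calc absCorrelation f a
      ≤ ∫ t, C ^ 2 * (|a| / 2) ^ p * (decayEnvelope p t + decayEnvelope p (t + a)) :=
        integral_mono (integrable_abs_mul_shift hmeas hf hp a)
          ((hint.add (hint.comp_add_right a)).const_mul _) hbound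
    _ = 2 * C ^ 2 * (∫ t, decayEnvelope p t) * (|a| / 2) ^ p := by
        rw [integral_const_mul, integral_add hint (hint.comp_add_right a),
          integral_add_right_eq_self (decayEnvelope p) a]
        ring

-- The `if` is needed at `a = 0`, where `|a| ^ (p + 1) = 0` by the convention `0 ^ x = 0`.
lemma absCorrelation_le_mul_min (hmeas : Measurable f)
    (hf : ∀ t, |f t| ≤ C * decayEnvelope p t) (hp : p < -1) (a : ℝ) :
    absCorrelation f a ≤ 2 ^ (1 - p) * C ^ 2 * (∫ t, decayEnvelope p t) *
      min 1 (if a = 0 then 1 else |a| ^ (p + 1)) := by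
  have hI := (integral_decayEnvelope_pos hp).le
  rcases lt_or_ge |a| 1 with ha1 | ha1
  · have hmin : min 1 (if a = 0 then 1 else |a| ^ (p + 1)) = 1 := by
      split_ifs with ha
      · exact min_self 1
      · exact min_eq_left
          (one_le_rpow_of_pos_of_le_one_of_nonpos (abs_pos.2 ha) ha1.le (by linarith))
    have h2 : (1 : ℝ) ≤ 2 ^ (1 - p) := one_le_rpow one_le_two (by linarith)
    rw [hmin, mul_one]
    refine (absCorrelation_le hmeas hf hp a).trans ?_
    nlinarith [mul_nonneg (sq_nonneg C) hI]
  · have ha : a ≠ 0 := abs_pos.1 (by linarith)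
    rw [if_neg ha, min_eq_right (rpow_le_one_of_one_le_of_nonpos ha1 (by linarith))]
    have hsplit : (|a| / 2) ^ p ≤ 2 ^ (-p) * |a| ^ (p + 1) := by
      rw [div_rpow (abs_nonneg a) zero_le_two, div_eq_mul_inv, ← rpow_neg zero_le_two, mul_comm]
      exact mul_le_mul_of_nonneg_left (rpow_le_rpow_of_exponent_le ha1 (by linarith))
        (rpow_nonneg zero_le_two _)
    calc absCorrelation f a ≤ 2 * C ^ 2 * (∫ t, decayEnvelope p t) * (|a| / 2) ^ p :=
          absCorrelation_le_of_ne_zero hmeas hf hp ha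
      _ ≤ 2 * C ^ 2 * (∫ t, decayEnvelope p t) * (2 ^ (-p) * |a| ^ (p + 1)) := by gcongr
      _ = 2 ^ (1 - p) * C ^ 2 * (∫ t, decayEnvelope p t) * |a| ^ (p + 1) := by
        rw [sub_eq_add_neg, rpow_add two_pos, rpow_one]; ring

end AbsCorrelation

lemma summable_sq_of_le_mul_rpow {F : ℤ → ℝ} {K q : ℝ} (hq : q < -1 / 2) (hF0 : ∀ k, 0 ≤ F k)
    (hF : ∀ k ≠ 0, F k ≤ K * |(k : ℝ)| ^ q) : Summable fun k => F k ^ 2 := by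
  refine Summable.of_norm_bounded_eventually
    ((summable_abs_int_rpow (b := -(q * (2 : ℕ))) (by push_cast; linarith)).mul_left (K ^ 2)) ?_
  filter_upwards [(finite_singleton (0 : ℤ)).compl_mem_cofinite] with k hk
  rw [neg_neg, rpow_mul_natCast (abs_nonneg _), norm_pow, norm_eq_abs, abs_of_nonneg (hF0 k),
    ← mul_pow]
  exact pow_le_pow_left₀ (hF0 k) (hF k hk) 2

lemma exists_second_diff_eq {f f' f'' : ℝ → ℝ} {x : ℝ}
    (hf : ∀ s ∈ Icc (x - 2) x, HasDerivAt f (f' s) s)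
    (hf' : ∀ s ∈ Icc (x - 2) x, HasDerivAt f' (f'' s) s) :
    ∃ e ∈ Ioo (x - 2) x, f x - 2 * f (x - 1) + f (x - 2) = f'' e := by
  have hφ : ∀ s ∈ Icc (x - 1) x,
      HasDerivAt (fun s => f s - f (s - 1)) (f' s - f' (s - 1)) s := fun s ⟨h1, h2⟩ =>
    (hf s ⟨by linarith, h2⟩).sub ((hf (s - 1) ⟨by linarith, by linarith⟩).comp_sub_const s 1)
  obtain ⟨c, ⟨hc1, hc2⟩, hc⟩ := exists_hasDerivAt_eq_slope _ _ (show x - 1 < x by linarith)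
    (fun s hs => (hφ s hs).continuousAt.continuousWithinAt)
    (fun s hs => hφ s (Ioo_subset_Icc_self hs))
  obtain ⟨e, ⟨he1, he2⟩, he⟩ := exists_hasDerivAt_eq_slope f' f'' (show c - 1 < c by linarith)
    (fun s ⟨h1, h2⟩ => (hf' s ⟨by linarith, by linarith⟩).continuousAt.continuousWithinAt)
    (fun s ⟨h1, h2⟩ => hf' s ⟨by linarith, by linarith⟩)
  refine ⟨e, ⟨by linarith, by linarith⟩, ?_⟩
  rw [sub_sub_cancel, div_one] at hc
  rw [sub_sub_cancel, div_one] at he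
  rw [he, hc, show x - 1 - 1 = x - 2 by ring]
  ring

lemma abs_rpow_second_diff_le {d t : ℝ} (hd0 : 0 < d) (hd1 : d < 1) (ht : 3 ≤ t) :
    |t ^ d - 2 * (t - 1) ^ d + (t - 2) ^ d| ≤ 9 * t ^ (d - 2) := by
  obtain ⟨e, ⟨he1, -⟩, he⟩ := exists_second_diff_eq (f := (· ^ d)) (f' := fun s => d * s ^ (d - 1))
    (f'' := fun s => d * (d - 1) * s ^ (d - 2)) (x := t)
    (fun s hs => hasDerivAt_rpow_const (Or.inl (by linarith [hs.1])))
    (fun s hs => by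
      have := (hasDerivAt_rpow_const (p := d - 1) (Or.inl (by linarith [hs.1] : s ≠ 0))).const_mul d
      rwa [show d - 1 - 1 = d - 2 by ring, ← mul_assoc] at this)
  have he3 : t / 3 ≤ e := by linarith
  have hde : |d * (d - 1)| ≤ 1 := by
    rw [abs_le]; constructor <;> nlinarith
  calc |t ^ d - 2 * (t - 1) ^ d + (t - 2) ^ d| = |d * (d - 1)| * e ^ (d - 2) := by
        rw [he, abs_mul, abs_of_nonneg (rpow_nonneg (by linarith) _)]
    _ ≤ 1 * (t / 3) ^ (d - 2) :=
        mul_le_mul hde (rpow_le_rpow_of_nonpos (by linarith) he3 (by linarith))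
          (rpow_nonneg (by linarith) _) zero_le_one
    _ = 3 ^ (2 - d) * t ^ (d - 2) := by
        rw [one_mul, div_rpow (by linarith) (by norm_num), div_eq_mul_inv, ← rpow_neg (by norm_num),
          neg_sub, mul_comm]
    _ ≤ 3 ^ (2 : ℝ) * t ^ (d - 2) := by
        gcongr
        · norm_num
        · linarith
    _ = 9 * t ^ (d - 2) := by norm_num

lemma measurable_diffFracKernel (d : ℝ) : Measurable (diffFracKernel d) := by
  unfold diffFracKernel; fun_prop

lemma abs_diffFracKernel_numerator_le {d : ℝ} (hd0 : 0 < d) (hd1 : d < 1) (t : ℝ) :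
    |max t 0 ^ d - 2 * max (t - 1) 0 ^ d + max (t - 2) 0 ^ d| ≤ 108 * decayEnvelope (d - 2) t := by
  rcases le_or_gt t 0 with ht | ht
  · rw [max_eq_right ht, max_eq_right (by linarith), max_eq_right (by linarith),
      zero_rpow hd0.ne']
    simpa using mul_nonneg (by norm_num : (0 : ℝ) ≤ 108) (decayEnvelope_nonneg _ t)
  rcases le_or_gt t 3 with ht3 | ht3
  · have hterm (x : ℝ) (hx : x ≤ 3) : 0 ≤ max x 0 ^ d ∧ max x 0 ^ d ≤ 3 := by
      refine ⟨rpow_nonneg (le_max_right x 0) d, ?_⟩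
      calc max x 0 ^ d ≤ 3 ^ d := rpow_le_rpow (le_max_right x 0) (max_le hx (by norm_num)) hd0.le
        _ ≤ 3 ^ (1 : ℝ) := rpow_le_rpow_of_exponent_le (by norm_num) hd1.le
        _ = 3 := rpow_one 3
    have hnum : |max t 0 ^ d - 2 * max (t - 1) 0 ^ d + max (t - 2) 0 ^ d| ≤ 12 := by
      obtain ⟨h0, h1⟩ := hterm t ht3
      obtain ⟨h2, h3⟩ := hterm (t - 1) (by linarith)
      obtain ⟨h4, h5⟩ := hterm (t - 2) (by linarith)
      rw [abs_le]; constructor <;> linarith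
    have henv : 1 / 9 ≤ decayEnvelope (d - 2) t := by
      refine le_min (by norm_num) ?_
      calc (1 / 9 : ℝ) = 3 ^ (-2 : ℝ) := by norm_num
        _ ≤ 3 ^ (d - 2) := rpow_le_rpow_of_exponent_le (by norm_num) (by linarith)
        _ ≤ |t| ^ (d - 2) :=
          rpow_le_rpow_of_nonpos (abs_pos.2 ht.ne') (by rwa [abs_of_pos ht]) (by linarith)
    linarith
  · rw [max_eq_left ht.le, max_eq_left (by linarith), max_eq_left (by linarith),
      decayEnvelope_eq_rpow (by linarith) (by linarith)]
    linarith [abs_rpow_second_diff_le hd0 hd1 ht3.le, rpow_nonneg ht.le (d - 2)]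

lemma abs_diffFracKernel_le {d : ℝ} (hd0 : 0 < d) (hd1 : d < 1) (t : ℝ) :
    |diffFracKernel d t| ≤ 108 / Gamma (d + 1) * decayEnvelope (d - 2) t := by
  have hΓ : 0 < Gamma (d + 1) := Gamma_pos_of_pos (by linarith)
  rw [diffFracKernel, abs_div, abs_of_pos hΓ, div_mul_eq_mul_div]
  exact div_le_div_of_nonneg_right (abs_diffFracKernel_numerator_le hd0 hd1 t) hΓ.le

/-- for `d ∈ (0,1/2)` there are constants `C, C' > 0` with
`|f̃_d(t)| ≤ C min(1, |t|^{d−2})` for all `t`, and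
`∫ |f̃_d(t) f̃_d(t+k)| dt ≤ C' min(1, |k|^{d−1})` for all `k ∈ ℤ`
(for `k = 0` the bound reads `C'`); consequently
`∑_{k∈ℤ} (∫ |f̃_d(t) f̃_d(t+k)| dt)² < ∞`. -/
theorem statement16 (d : ℝ) (hd : d ∈ Set.Ioo (0 : ℝ) (1 / 2)) :
    (∃ C : ℝ, 0 < C ∧ ∀ t : ℝ,
        |diffFracKernel d t| ≤ C * min 1 (|t| ^ (d - 2)))
    ∧ (∃ C' : ℝ, 0 < C' ∧ ∀ k : ℤ,
        (∫ t : ℝ, |diffFracKernel d t * diffFracKernel d (t + (k : ℝ))|)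
          ≤ C' * min 1 (if k = 0 then 1 else |(k : ℝ)| ^ (d - 1)))
    ∧ Summable (fun k : ℤ =>
        (∫ t : ℝ, |diffFracKernel d t * diffFracKernel d (t + (k : ℝ))|) ^ 2) := by
  obtain ⟨hd0, hd1⟩ := hd
  have hp : d - 2 < -1 := by linarith
  have hf := abs_diffFracKernel_le hd0 (by linarith)
  set K := 2 ^ (1 - (d - 2)) * (108 / Gamma (d + 1)) ^ 2 * ∫ t, decayEnvelope (d - 2) t
  have hK : 0 < K := by
    have := integral_decayEnvelope_pos hp
    have := Gamma_pos_of_pos (by linarith : 0 < d + 1)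
    positivity
  have hcorr (k : ℤ) : absCorrelation (diffFracKernel d) k
      ≤ K * min 1 (if k = 0 then 1 else |(k : ℝ)| ^ (d - 1)) := by
    simpa only [Int.cast_eq_zero, show d - 2 + 1 = d - 1 by ring] using
      absCorrelation_le_mul_min (measurable_diffFracKernel d) hf hp k
  refine ⟨⟨_, by positivity, hf⟩, ⟨K, hK, hcorr⟩, ?_⟩
  refine summable_sq_of_le_mul_rpow (K := K) (by linarith : d - 1 < -1 / 2)
    (fun k => integral_nonneg fun t => abs_nonneg _) fun k hk => (hcorr k).trans ?_
  rw [if_neg hk]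
  exact mul_le_mul_of_nonneg_left (min_le_right _ _) hK.le
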